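/- arXiv:2106.14856 — 2 statements merged into one kernel-verified Lean document; each statement's English description precedes it below -/
import Mathlib

section
/- For every prime p, every l ∈ ℕ, and every x ∈ X_{p^l} with x ≠ ∞, there exists a well directed path from ∞ to x in the graph F_{p^l}. -/
/-- Membership in the vertex set `X_N`: a pair `(p, q)` of integers represents the
reduced fraction `p/q` with `q ≥ 0`, `gcd(p, q) = 1` and `N ∣ q`; the pair `(1, 0)`
represents `∞ = 1/0`. -/
def memX (N : ℕ) (v : ℤ × ℤ) : Prop :=
  0 ≤ v.2 ∧ IsCoprime v.1 v.2 ∧ (N : ℤ) ∣ v.2 ∧ (v.2 = 0 → v.1 = 1)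

/-- The vertex set `X_N` of the graph `F_N`. -/
def X (N : ℕ) : Type := {v : ℤ × ℤ // memX N v}

/-- The vertex `∞ = 1/0`. -/
def infty (N : ℕ) : X N :=
  ⟨(1, 0), ⟨le_refl 0, isCoprime_one_left, dvd_zero _, fun _ => rfl⟩⟩

/-- The value of a vertex as a rational number (`∞` is sent to junk). -/
def fval {N : ℕ} (v : X N) : ℚ := (v.1.1 : ℚ) / (v.1.2 : ℚ)

/-- The graph `F_N`: two vertices `p/q` and `r/s` (in lowest terms, with `∞ = 1/0`)
are adjacent if and only if `r*q - s*p = ±N`. -/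
def FareyGraph (N : ℕ) : SimpleGraph (X N) where
  Adj v w := v ≠ w ∧ (w.1.1 * v.1.2 - w.1.2 * v.1.1 = (N : ℤ) ∨
      w.1.1 * v.1.2 - w.1.2 * v.1.1 = -(N : ℤ))
  symm := by
    constructor
    rintro v w ⟨hne, h | h⟩
    · exact ⟨hne.symm, Or.inr (by linear_combination -h)⟩
    · exact ⟨hne.symm, Or.inl (by linear_combination -h)⟩
  loopless := by constructor; rintro v ⟨hne, -⟩; exact hne rfl

/-- `P 0 = ∞ = P₋₁, P 1 = P₀, …, P (n+1) = Pₙ` is a well directed path in `F_N`: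
consecutive vertices are adjacent, denominators strictly increase, and whenever
`P_{i-1}` is adjacent to `P_{i+1}` (paper indices, `0 ≤ i ≤ n-2`), the edge from
`P_{i+1}` to `P_{i+2}` is direction changing, i.e.
`P_i < P_{i+2} < P_{i+1}` or `P_{i+1} < P_{i+2} < P_i`. -/
def IsWellDirectedPath (N : ℕ) (n : ℕ) (P : ℕ → X N) : Prop :=
  P 0 = infty N ∧
  (∀ i, i ≤ n → (FareyGraph N).Adj (P i) (P (i + 1))) ∧
  (∀ i, i ≤ n → (P i).1.2 < (P (i + 1)).1.2) ∧
  (∀ i, i + 2 ≤ n → (FareyGraph N).Adj (P i) (P (i + 2)) →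
    (fval (P (i + 1)) < fval (P (i + 3)) ∧ fval (P (i + 3)) < fval (P (i + 2))) ∨
    (fval (P (i + 2)) < fval (P (i + 3)) ∧ fval (P (i + 3)) < fval (P (i + 1))))

/-!
Induct on the denominator `b` of `x = a/b`, writing `det v x = a v.2 - b v.1`. The equation
`det v x = ε` has exactly one solution `v` with `0 ≤ v.2 < b`, and `x - v` then has determinant
`-ε` with `x`. Both `gcd v` and `gcd (x - v)` divide `±p^l`, so if neither `v` nor `x - v` were a
reduced fraction, `p` would divide both gcds and hence `a` and `b`. So one of them is a
predecessor of `x` in `F_{p^l}`.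

Two neighbours of `w` with smaller distinct denominators have opposite determinants with `w`
(indeed they add up to `w`), so appending an edge `w → z` to a path `… → P_n → w` is direction
changing exactly when `det P_n w = -det w z`. The induction therefore proves more: for either
sign `ε`, the path can be chosen so that, if its last two edges close a triangle, its last edge
has determinant `-ε`. Take the predecessor `v` with `det v x = -ε` if it is reduced; if not, the
path through `x - v` closes no triangle, because the third vertex would be `v`.
-/

def det (v w : ℤ × ℤ) : ℤ := w.1 * v.2 - w.2 * v.1

theorem det_sub_left (v x : ℤ × ℤ) : det (x - v) x = -det v x := by
  simp only [det, Prod.fst_sub, Prod.snd_sub]; ring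

theorem eq_of_det_eq {u v w : ℤ × ℤ} (hw : IsCoprime w.1 w.2) (hu : 0 ≤ u.2) (huw : u.2 < w.2)
    (hv : 0 ≤ v.2) (hvw : v.2 < w.2) (h : det u w = det v w) : u = v := by
  have hmul : w.1 * (u.2 - v.2) = w.2 * (u.1 - v.1) := by unfold det at h; linear_combination h
  have h2 : u.2 - v.2 = 0 :=
    Int.eq_zero_of_abs_lt_dvd (hw.symm.dvd_of_dvd_mul_left ⟨_, hmul⟩)
      (abs_sub_lt_iff.2 ⟨by linarith, by linarith⟩)
  have h1 : u.1 - v.1 = 0 := by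
    rw [h2, mul_zero, eq_comm, mul_eq_zero] at hmul
    exact hmul.resolve_left (by linarith)
  exact Prod.ext (by linarith) (by linarith)

theorem exists_det_eq {x : ℤ × ℤ} (hx : IsCoprime x.1 x.2) (hx2 : 0 < x.2) (ε : ℤ) :
    ∃ v : ℤ × ℤ, 0 ≤ v.2 ∧ v.2 < x.2 ∧ det v x = ε := by
  obtain ⟨u, w, huw⟩ := hx
  -- `(-ε w, ε u)` is a solution by Bézout; shift it by a multiple of `x`
  refine ⟨(-ε * w - x.1 * (ε * u / x.2), ε * u % x.2), Int.emod_nonneg _ hx2.ne',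
    Int.emod_lt_of_pos _ hx2, ?_⟩
  simp only [det, Int.emod_def]
  linear_combination ε * huw

theorem dvd_snd_of_dvd_det {N : ℤ} {v x : ℤ × ℤ} (hx : IsCoprime x.1 x.2) (hNx : N ∣ x.2)
    (hN : N ∣ det v x) : N ∣ v.2 := by
  have h : N ∣ x.1 * v.2 := by
    have : x.1 * v.2 = det v x + x.2 * v.1 := by unfold det; ring
    rw [this]
    exact dvd_add hN (hNx.mul_right _)
  exact (hx.of_isCoprime_of_dvd_right hNx).symm.dvd_of_dvd_mul_left h

theorem prime_dvd_of_not_isCoprime {p l : ℕ} (hp : p.Prime) {v x : ℤ × ℤ}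
    (hdet : det v x ∣ ↑(p ^ l)) (hv : ¬IsCoprime v.1 v.2) : (p : ℤ) ∣ v.1 ∧ (p : ℤ) ∣ v.2 := by
  set g := Int.gcd v.1 v.2
  have hg : (g : ℤ) ∣ det v x :=
    dvd_sub ((Int.gcd_dvd_right _ _).mul_left _) ((Int.gcd_dvd_left _ _).mul_left _)
  have hgp : g ∣ p ^ l := by exact_mod_cast hg.trans hdet
  obtain ⟨k, -, hk⟩ := (Nat.dvd_prime_pow hp).1 hgp
  have hk0 : k ≠ 0 := by
    rintro rfl
    exact hv (Int.isCoprime_iff_gcd_eq_one.2 (by simpa using hk))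
  have hpg : (p : ℤ) ∣ g := by exact_mod_cast hk ▸ dvd_pow_self p hk0
  exact ⟨hpg.trans (Int.gcd_dvd_left _ _), hpg.trans (Int.gcd_dvd_right _ _)⟩

theorem isCoprime_sub_of_not_isCoprime {p l : ℕ} (hp : p.Prime) {v x : ℤ × ℤ}
    (hx : IsCoprime x.1 x.2) (hdet : det v x ∣ ↑(p ^ l)) (hv : ¬IsCoprime v.1 v.2) :
    IsCoprime (x - v).1 (x - v).2 := by
  by_contra hxv
  obtain ⟨hv1, hv2⟩ := prime_dvd_of_not_isCoprime hp hdet hv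
  obtain ⟨hxv1, hxv2⟩ :=
    prime_dvd_of_not_isCoprime hp (x := x) (by rwa [det_sub_left, neg_dvd]) hxv
  have hunit : IsUnit (p : ℤ) := hx.isUnit_of_dvd'
    (by simpa using dvd_add hxv1 hv1) (by simpa using dvd_add hxv2 hv2)
  exact (Nat.prime_iff_prime_int.1 hp).not_isUnit hunit

theorem lt_of_det_pos {v w : ℤ × ℤ} (hv : 0 < v.2) (hw : 0 < w.2) (h : 0 < det v w) :
    (v.1 : ℚ) / v.2 < w.1 / w.2 := by
  rw [div_lt_div_iff₀ (by exact_mod_cast hv) (by exact_mod_cast hw)]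
  unfold det at h
  exact_mod_cast (by linarith : v.1 * w.2 < w.1 * v.2)

theorem between_of_det_eq_neg {v w z : ℤ × ℤ} (hv : 0 < v.2) (hw : 0 < w.2) (hvz : v.2 < z.2)
    (hd : det v w ≠ 0) (hwz : det w z = -det v w) :
    ((v.1 : ℚ) / v.2 < z.1 / z.2 ∧ (z.1 : ℚ) / z.2 < w.1 / w.2) ∨
      ((w.1 : ℚ) / w.2 < z.1 / z.2 ∧ (z.1 : ℚ) / z.2 < v.1 / v.2) := by
  have hz : 0 < z.2 := hv.trans hvz
  have hplucker : w.2 * det v z = det v w * (z.2 - v.2) := by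
    unfold det at hwz ⊢; linear_combination v.2 * hwz
  have hzw : det z w = det v w := by unfold det at hwz ⊢; linear_combination -hwz
  have hswap : ∀ a b : ℤ × ℤ, det b a = -det a b := fun a b => by unfold det; ring
  rcases hd.lt_or_gt with hneg | hpos
  · right
    have hvz' : det v z < 0 := by nlinarith
    exact ⟨lt_of_det_pos hw hz (by linarith),
      lt_of_det_pos hz hv (by rw [hswap]; linarith)⟩
  · left
    have hvz' : 0 < det v z := by nlinarith
    exact ⟨lt_of_det_pos hv hz hvz', lt_of_det_pos hz hw (by linarith)⟩

theorem X.snd_pos_of_ne_infty {N : ℕ} {x : X N} (hx : x ≠ infty N) : 0 < x.1.2 := by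
  rcases x.2.1.lt_or_eq with h | h
  · exact h
  · exact absurd (Subtype.ext (Prod.ext (x.2.2.2.2 h.symm) h.symm)) hx

theorem X.ne_infty_of_snd_pos {N : ℕ} {x : X N} (hx : 0 < x.1.2) : x ≠ infty N := by
  rintro rfl
  exact hx.ne rfl

theorem FareyGraph.adj_iff {N : ℕ} {v w : X N} :
    (FareyGraph N).Adj v w ↔ v ≠ w ∧ (det v.1 w.1 = N ∨ det v.1 w.1 = -N) :=
  Iff.rfl

theorem FareyGraph.det_eq_neg_of_adj {N : ℕ} {u v w : X N} (huv : u.1.2 ≠ v.1.2)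
    (huw : u.1.2 < w.1.2) (hvw : v.1.2 < w.1.2) (hu : (FareyGraph N).Adj u w)
    (hv : (FareyGraph N).Adj v w) : det u.1 w.1 = -det v.1 w.1 := by
  have hne : det u.1 w.1 ≠ det v.1 w.1 := fun h =>
    huv (congrArg Prod.snd (eq_of_det_eq w.2.2.1 u.2.1 huw v.2.1 hvw h))
  rcases (FareyGraph.adj_iff.1 hu).2 with hu | hu <;>
    rcases (FareyGraph.adj_iff.1 hv).2 with hv | hv <;>
    rw [hu, hv] at hne ⊢ <;> first | exact (hne rfl).elim | ring

theorem FareyGraph.adj_of_det {N : ℕ} {v w : X N} (hvw : v.1.2 < w.1.2)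
    (h : det v.1 w.1 = N ∨ det v.1 w.1 = -N) : (FareyGraph N).Adj v w :=
  FareyGraph.adj_iff.2 ⟨fun h => hvw.ne (h ▸ rfl), h⟩

theorem FareyGraph.add_eq_of_adj {N : ℕ} {u v w : X N} (huv : u.1.2 ≠ v.1.2) (hv0 : 0 < v.1.2)
    (huw : u.1.2 < w.1.2) (hvw : v.1.2 < w.1.2) (hu : (FareyGraph N).Adj u w)
    (hv : (FareyGraph N).Adj v w) : u.1 + v.1 = w.1 := by
  have hwv : 0 ≤ (w.1 - v.1).2 := by rw [Prod.snd_sub]; linarith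
  have hwv' : (w.1 - v.1).2 < w.1.2 := by rw [Prod.snd_sub]; linarith
  have := eq_of_det_eq w.2.2.1 u.2.1 huw hwv hwv' <| by
    rw [det_sub_left, FareyGraph.det_eq_neg_of_adj huv huw hvw hu hv]
  rw [this, sub_add_cancel]

/-- `P` is a well directed path of length `n` to `x` which stays well directed when it is
continued by an edge `x → z` with `det x z = ε` and a larger denominator. -/
def IsContinuablePath (N n : ℕ) (P : ℕ → X N) (x : X N) (ε : ℤ) : Prop :=
  IsWellDirectedPath N n P ∧ P (n + 1) = x ∧
    ∀ m, n = m + 1 → (FareyGraph N).Adj (P m) x → det (P n).1 x.1 = -ε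

theorem isWellDirectedPath_zero {N : ℕ} {x : X N} (hx : (FareyGraph N).Adj (infty N) x)
    (hx2 : 0 < x.1.2) : IsWellDirectedPath N 0 (fun k => if k = 0 then infty N else x) :=
  ⟨rfl, fun i hi => by obtain rfl := Nat.le_zero.1 hi; exact hx,
    fun i hi => by obtain rfl := Nat.le_zero.1 hi; exact hx2, fun i hi => by omega⟩

theorem IsContinuablePath.snoc {N n : ℕ} {P : ℕ → X N} {w z : X N} (hN : 0 < N)
    (hP : IsContinuablePath N n P w (det w.1 z.1)) (hwz : (FareyGraph N).Adj w z)
    (hlt : w.1.2 < z.1.2) : IsWellDirectedPath N (n + 1) (Function.update P (n + 2) z) := by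
  obtain ⟨⟨h0, hadj, hmono, hdir⟩, hw, hturn⟩ := hP
  have hnew : Function.update P (n + 2) z (n + 2) = z := Function.update_self _ _ _
  have hold : ∀ k ≤ n + 1, Function.update P (n + 2) z k = P k :=
    fun k hk => Function.update_of_ne (by omega) _ _
  refine ⟨by rw [hold 0 (by omega), h0], fun i hi => ?_, fun i hi => ?_, fun i hi hPi => ?_⟩
  · rcases (show i ≤ n ∨ i = n + 1 by omega) with hi | rfl
    · rw [hold i (by omega), hold (i + 1) (by omega)]; exact hadj i hi
    · rw [hold _ le_rfl, hnew, hw]; exact hwz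
  · rcases (show i ≤ n ∨ i = n + 1 by omega) with hi | rfl
    · rw [hold i (by omega), hold (i + 1) (by omega)]; exact hmono i hi
    · rw [hold _ le_rfl, hnew, hw]; exact hlt
  · rcases (show i + 2 ≤ n ∨ n = i + 1 by omega) with hi | rfl
    · rw [hold i (by omega), hold (i + 2) (by omega)] at hPi
      rw [hold (i + 1) (by omega), hold (i + 2) (by omega), hold (i + 3) (by omega)]
      exact hdir i hi hPi
    · have hw' : P (i + 2) = w := hw
      rw [hold i (by omega), hold (i + 2) (by omega), hw'] at hPi
      rw [hold (i + 1) (by omega), hold (i + 2) (by omega), hw', hnew]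
      have hPi1 : 0 < (P (i + 1)).1.2 := (P i).2.1.trans_lt (hmono i (by omega))
      have hPw : (P (i + 1)).1.2 < w.1.2 := hw ▸ hmono (i + 1) le_rfl
      have hdet : det (P (i + 1)).1 w.1 ≠ 0 := by
        rcases (FareyGraph.adj_iff.1 (hw ▸ hadj (i + 1) le_rfl)).2 with h | h <;> rw [h] <;>
          simp [hN.ne']
      exact between_of_det_eq_neg hPi1 (hPi1.trans hPw) (hPw.trans hlt) hdet
        (by rw [hturn i rfl hPi, neg_neg])

theorem exists_isContinuablePath_of_forall_adj {p l : ℕ} (hp : p.Prime) {x : X (p ^ l)}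
    (hx : x ≠ infty (p ^ l)) {ε : ℤ} (hε : ε = ↑(p ^ l) ∨ ε = -↑(p ^ l))
    (via : ∀ v : X (p ^ l), 0 < v.1.2 → v.1.2 < x.1.2 → (FareyGraph (p ^ l)).Adj v x →
      ∃ n P, IsWellDirectedPath (p ^ l) n P ∧ P (n + 1) = x ∧ P n = v) :
    ∃ n P, IsContinuablePath (p ^ l) n P x ε := by
  have hx2 : 0 < x.1.2 := X.snd_pos_of_ne_infty hx
  obtain ⟨-, hxcop, hNx, -⟩ := x.2
  have hε' : -ε = ↑(p ^ l) ∨ -ε = -↑(p ^ l) := by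
    rcases hε with rfl | rfl
    exacts [.inr rfl, .inl (neg_neg _)]
  have hεN : Associated ε ↑(p ^ l) := Int.associated_iff.2 hε
  obtain ⟨v, hv0, hvx, hdet⟩ := exists_det_eq hxcop hx2 (-ε)
  have hNv : (↑(p ^ l) : ℤ) ∣ v.2 :=
    dvd_snd_of_dvd_det hxcop hNx (by rw [hdet, dvd_neg]; exact hεN.symm.dvd)
  rcases hv0.eq_or_lt with hv0 | hv0
  · -- `v.2 = 0` forces `x.2 = p ^ l`, and the path is the single edge `∞ → x`
    have hxN : x.1.2 = ↑(p ^ l) := by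
      have hxε : x.1.2 ∣ ε := ⟨v.1, by unfold det at hdet; rw [← hv0] at hdet; linarith⟩
      exact Int.dvd_antisymm hx2.le (by positivity) (hxε.trans hεN.dvd) hNx
    refine ⟨0, _, isWellDirectedPath_zero (FareyGraph.adj_iff.2 ⟨hx.symm, .inr ?_⟩) hx2, rfl,
      fun m hm => by omega⟩
    simp [det, infty, hxN]
  by_cases hcop : IsCoprime v.1 v.2
  · obtain ⟨n, P, hP, hPx, hPn⟩ := via ⟨v, hv0.le, hcop, hNv, fun h => absurd h hv0.ne'⟩ hv0 hvx
      (FareyGraph.adj_of_det hvx (hdet ▸ hε'))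
    exact ⟨n, P, hP, hPx, fun _ _ _ => by rw [hPn]; exact hdet⟩
  -- otherwise the predecessor `x - v` is reduced, and the path through it closes no triangle:
  -- the third vertex would be `x - (x - v) = v`
  have hcop' := isCoprime_sub_of_not_isCoprime hp hxcop (by rw [hdet]; exact neg_dvd.2 hεN.dvd) hcop
  have hw2 : 0 < (x.1 - v).2 := by rw [Prod.snd_sub]; linarith
  have hwx : (x.1 - v).2 < x.1.2 := by rw [Prod.snd_sub]; linarith
  set w : X (p ^ l) := ⟨x.1 - v, hw2.le, hcop', dvd_sub hNx hNv, fun h => absurd h hw2.ne'⟩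
  have hw : (FareyGraph (p ^ l)).Adj w x :=
    FareyGraph.adj_of_det hwx (by rw [det_sub_left, hdet, neg_neg]; exact hε)
  obtain ⟨n, P, hP, hPx, hPn⟩ := via w hw2 hwx hw
  refine ⟨n, P, hP, hPx, fun m hm hadj => absurd ?_ hcop⟩
  have hmn : (P m).1.2 < w.1.2 := by rw [← hPn]; subst hm; exact hP.2.2.1 m m.le_succ
  have hPm : (P m).1 = v := by
    linear_combination FareyGraph.add_eq_of_adj hmn.ne hw2 (hmn.trans hwx) hwx hadj hw
  exact hPm ▸ (P m).2.2.1

theorem exists_isContinuablePath {p l : ℕ} (hp : p.Prime) (x : X (p ^ l))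
    (hx : x ≠ infty (p ^ l)) (ε : ℤ) (hε : ε = ↑(p ^ l) ∨ ε = -↑(p ^ l)) :
    ∃ n P, IsContinuablePath (p ^ l) n P x ε := by
  induction hb : x.1.2.toNat using Nat.strong_induction_on generalizing x ε with
  | _ b ih =>
  refine exists_isContinuablePath_of_forall_adj hp hx hε fun v hv hvx hadj => ?_
  obtain ⟨n, P, hP⟩ :=
    ih v.1.2.toNat (by omega) v (X.ne_infty_of_snd_pos hv) (det v.1 x.1) hadj.2 rfl
  refine ⟨n + 1, _, hP.snoc (pow_pos hp.pos l) hadj hvx, Function.update_self _ _ _, ?_⟩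
  rw [Function.update_of_ne (by omega), hP.2.1]

theorem stmt12_general (p l : ℕ) (hp : p.Prime) (x : X (p ^ l))
    (hx : x ≠ infty (p ^ l)) :
    ∃ (n : ℕ) (P : ℕ → X (p ^ l)),
      IsWellDirectedPath (p ^ l) n P ∧ P (n + 1) = x := by
  obtain ⟨n, P, hP, hPx, -⟩ := exists_isContinuablePath hp x hx _ (.inl rfl)
  exact ⟨n, P, hP, hPx⟩

/-- For every prime `p`, every `l ∈ ℕ`, and every vertex
`x ≠ ∞` of `F_{p^l}`, there exists a well directed path from `∞` to `x`. -/
theorem stmt12 (p l : ℕ) (hp : p.Prime) (hl : 1 ≤ l) (x : X (p ^ l))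
    (hx : x ≠ infty (p ^ l)) :
    ∃ (n : ℕ) (P : ℕ → X (p ^ l)),
      IsWellDirectedPath (p ^ l) n P ∧ P (n + 1) = x :=
  stmt12_general p l hp x hx
end

section
/- For every l ∈ ℕ and every x ∈ X_{2^l} with x ≠ ∞, there exists exactly one finite F_{2^l}-continued fraction whose value is x. -/
/-- A finite `F_N`-continued fraction `1/(0+) N/(b+) ε₁/(a₁+) ⋯ εₙ/(aₙ)` with `n`
partial quotients.  Indices are shifted by one: the field `p i` is the paper's
`p_{i-1}`, so `p 0 = p₋₁ = 1`, `q 0 = q₋₁ = 0`, `p 1 = p₀ = b`, `q 1 = q₀ = N`,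
and the paper's `i`-th convergent `p_i/q_i` is `p (i+1) / q (i+1)`. -/
structure FCF (N : ℕ) (n : ℕ) where
  b : ℤ
  a : ℕ → ℤ
  ε : ℕ → ℤ
  p : ℕ → ℤ
  q : ℕ → ℤ
  hb : IsCoprime b (N : ℤ)
  hp0 : p 0 = 1
  hq0 : q 0 = 0
  hp1 : p 1 = b
  hq1 : q 1 = N
  ha : ∀ i, 1 ≤ i → i ≤ n → 1 ≤ a i
  hε : ∀ i, 1 ≤ i → i ≤ n → ε i = 1 ∨ ε i = -1
  hrecp : ∀ i, 1 ≤ i → i ≤ n → p (i + 1) = a i * p i + ε i * p (i - 1)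
  hrecq : ∀ i, 1 ≤ i → i ≤ n → q (i + 1) = a i * q i + ε i * q (i - 1)
  cond1 : ∀ i, 1 ≤ i → i < n → 1 ≤ a i + ε (i + 1)
  cond2 : ∀ i, 1 ≤ i → i ≤ n → 1 ≤ a i + ε i
  cond3 : ∀ i, 1 ≤ i → i ≤ n → IsCoprime (p (i + 1)) (q (i + 1))

/-! Since `N` is even and `pᵢ` is coprime to the multiple `qᵢ` of `N`, every `pᵢ` is odd; hence
every `aᵢ` is even, and the denominators `qᵢ` increase strictly. Consecutive convergents satisfy
`|pᵢ₊₁ qᵢ - qᵢ₊₁ pᵢ| = N`, so the penultimate convergent `r/s` of a continued fraction for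
`x = p/q` is a neighbour of `x` in `F_N` with `0 < s < q` and `r` odd. There is only one such
neighbour: two neighbours of the same orientation differ by a multiple of `q`, and two of opposite
orientation satisfy `s + s' = q` and `r + r' = p`, contradicting the parity of `p`. Uniqueness
follows by induction on the length. For `N = 2^l` such a neighbour exists (from Bézout, replacing
`r/s` by `(p - r)/(q - s)` if `r` is even), and a continued fraction for `x` is obtained from one
for the neighbour by appending a single partial quotient, computed by Cramer's rule. -/

theorem isCoprime_of_abs_cross_eq_two_pow {p q r s : ℤ} {l : ℕ}
    (h : |p * s - q * r| = 2 ^ l) (hr : Odd r) : IsCoprime r s := by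
  have h2l : IsCoprime r |p * s + r * -q| := by
    rw [show p * s + r * -q = p * s - q * r by ring, h]
    exact (Int.isCoprime_two_right.2 hr).pow_right
  rw [IsCoprime.abs_right_iff, IsCoprime.add_mul_left_right_iff] at h2l
  exact h2l.of_mul_right_right

theorem exists_lower_neighbor {p q : ℤ} {l : ℕ} (hpq : IsCoprime p q) (hp : Odd p)
    (hq : 2 ^ l ∣ q) (hlt : 2 ^ l < q) :
    ∃ r s : ℤ, 0 < s ∧ s < q ∧ 2 ^ l ∣ s ∧ IsCoprime r s ∧ |p * s - q * r| = 2 ^ l := by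
  obtain ⟨u, v, huv⟩ := hpq
  have hq0 : 0 < q := lt_trans (by positivity) hlt
  set s := 2 ^ l * u % q with hs
  set r := -(2 ^ l) * v - p * (2 ^ l * u / q) with hr
  have hcross : p * s - q * r = 2 ^ l := by
    rw [hs, hr, Int.emod_def]; linear_combination (2 : ℤ) ^ l * huv
  have hs0 : 0 ≤ s := Int.emod_nonneg _ hq0.ne'
  have hsq : s < q := Int.emod_lt_of_pos _ hq0
  have hsdvd : 2 ^ l ∣ s := by
    rw [hs, Int.emod_def]; exact (dvd_mul_right _ u).sub (hq.mul_right _)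
  have hs0' : 0 < s := by
    refine hs0.lt_of_ne fun h => ?_
    rw [← h] at hcross
    have : q ∣ 2 ^ l := ⟨-r, by linear_combination -hcross⟩
    linarith [Int.le_of_dvd (by positivity) this]
  -- of the two neighbours `r/s` and `(p - r)/(q - s)` of `p/q` below it, one has odd numerator
  rcases Int.even_or_odd r with hr | hr
  · have hcross' : |p * (q - s) - q * (p - r)| = 2 ^ l := by
      rw [show p * (q - s) - q * (p - r) = -(p * s - q * r) by ring, hcross, abs_neg]
      exact abs_of_pos (by positivity)
    exact ⟨p - r, q - s, by omega, by omega, hq.sub hsdvd,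
      isCoprime_of_abs_cross_eq_two_pow hcross' (hp.sub_even hr), hcross'⟩
  · have hcross' : |p * s - q * r| = 2 ^ l := by rw [hcross]; exact abs_of_pos (by positivity)
    exact ⟨r, s, hs0', hsq, hsdvd, isCoprime_of_abs_cross_eq_two_pow hcross' hr, hcross'⟩

theorem lower_neighbor_unique {p q r s r' s' : ℤ} (hpq : IsCoprime p q) (hp : Odd p)
    (hr : Odd r) (hr' : Odd r') (hs : 0 < s) (hsq : s < q) (hs' : 0 < s') (hs'q : s' < q)
    (h : |p * s - q * r| = |p * s' - q * r'|) : r = r' ∧ s = s' := by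
  rcases abs_eq_abs.1 h with h | h
  · have hdvd : q ∣ s - s' := hpq.symm.dvd_of_dvd_mul_left ⟨r - r', by linear_combination h⟩
    obtain rfl : s = s' :=
      sub_eq_zero.1 (Int.eq_zero_of_abs_lt_dvd hdvd (abs_lt.2 ⟨by omega, by omega⟩))
    exact ⟨by nlinarith, rfl⟩
  · -- the two neighbours are mirror images `s' = q - s`, forcing `p = r + r'`, which is even
    have hdvd : q ∣ s + s' - q :=
      (hpq.symm.dvd_of_dvd_mul_left ⟨r + r', by linear_combination h⟩).sub dvd_rfl
    have hss' : s + s' = q := by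
      linarith [Int.eq_zero_of_abs_lt_dvd hdvd (abs_lt.2 ⟨by omega, by omega⟩)]
    have hp' : p = r + r' := by
      have : q * (p - (r + r')) = 0 := by linear_combination h - p * hss'
      exact sub_eq_zero.1 ((mul_eq_zero.1 this).resolve_left (by omega))
    exact absurd (hp' ▸ hr.add_odd hr') (Int.not_even_iff_odd.2 hp)

theorem eq_and_eq_of_combination_eq {a e a' e' p₁ q₁ p₀ q₀ : ℤ}
    (hD : p₁ * q₀ - q₁ * p₀ ≠ 0) (hp : a * p₁ + e * p₀ = a' * p₁ + e' * p₀)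
    (hq : a * q₁ + e * q₀ = a' * q₁ + e' * q₀) : a = a' ∧ e = e' := by
  have ha : (a - a') * (p₁ * q₀ - q₁ * p₀) = 0 := by linear_combination q₀ * hp - p₀ * hq
  have he : (e - e') * (p₁ * q₀ - q₁ * p₀) = 0 := by linear_combination p₁ * hq - q₁ * hp
  exact ⟨sub_eq_zero.1 ((mul_eq_zero.1 ha).resolve_right hD),
    sub_eq_zero.1 ((mul_eq_zero.1 he).resolve_right hD)⟩

theorem exists_sign_mul_of_abs_eq {x : ℤ} {d : ℕ} (h : |x| = d) :
    ∃ δ : ℤ, (δ = 1 ∨ δ = -1) ∧ x = δ * d := by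
  rcases (abs_eq (Nat.cast_nonneg d)).1 h with h | h
  exacts [⟨1, .inl rfl, by simp [h]⟩, ⟨-1, .inr rfl, by simp [h]⟩]

namespace FCF

variable {N n : ℕ}

section Convergents

variable (F : FCF N n)

theorem p_add_two {i : ℕ} (hi : i < n) :
    F.p (i + 2) = F.a (i + 1) * F.p (i + 1) + F.ε (i + 1) * F.p i :=
  F.hrecp (i + 1) (by omega) hi

theorem q_add_two {i : ℕ} (hi : i < n) :
    F.q (i + 2) = F.a (i + 1) * F.q (i + 1) + F.ε (i + 1) * F.q i :=
  F.hrecq (i + 1) (by omega) hi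

theorem abs_ε {i : ℕ} (h1 : 1 ≤ i) (h2 : i ≤ n) : |F.ε i| = 1 := by
  rcases F.hε i h1 h2 with h | h <;> simp [h]

theorem natCast_dvd_q {j : ℕ} (hj : j ≤ n + 1) : (N : ℤ) ∣ F.q j := by
  induction j using Nat.strong_induction_on with
  | _ j ih =>
    match j, hj with
    | 0, _ => simp [F.hq0]
    | 1, _ => simp [F.hq1]
    | i + 2, hj =>
      rw [F.q_add_two (by omega)]
      exact ((ih _ (by omega) (by omega)).mul_left _).add
        ((ih _ (by omega) (by omega)).mul_left _)

theorem isCoprime_p_q {j : ℕ} (hj : j ≤ n + 1) : IsCoprime (F.p j) (F.q j) := by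
  match j, hj with
  | 0, _ => rw [F.hp0]; exact isCoprime_one_left
  | 1, _ => rw [F.hp1, F.hq1]; exact F.hb
  | i + 2, hj => exact F.cond3 (i + 1) (by omega) (by omega)

theorem abs_det {j : ℕ} (hj : j ≤ n) : |F.p (j + 1) * F.q j - F.q (j + 1) * F.p j| = N := by
  induction j with
  | zero => simp [F.hp0, F.hq0, F.hp1, F.hq1]
  | succ i ih =>
    have h : F.p (i + 2) * F.q (i + 1) - F.q (i + 2) * F.p (i + 1) =
        -F.ε (i + 1) * (F.p (i + 1) * F.q i - F.q (i + 1) * F.p i) := by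
      rw [F.p_add_two hj, F.q_add_two hj]; ring
    rw [h, abs_mul, abs_neg, F.abs_ε (by omega) hj, one_mul, ih (by omega)]

theorem odd_p (hN : 2 ∣ N) {j : ℕ} (hj : j ≤ n + 1) : Odd (F.p j) :=
  Int.isCoprime_two_right.1 <| (F.isCoprime_p_q hj).of_isCoprime_of_dvd_right <|
    (Int.natCast_dvd_natCast.2 hN).trans (F.natCast_dvd_q hj)

theorem even_a (hN : 2 ∣ N) {i : ℕ} (h1 : 1 ≤ i) (h2 : i ≤ n) : Even (F.a i) := by
  obtain ⟨k, rfl⟩ : ∃ k, i = k + 1 := ⟨i - 1, by omega⟩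
  have hε : Odd (F.ε (k + 1)) := by rcases F.hε (k + 1) h1 h2 with h | h <;> simp [h]
  have hsum : Odd (F.a (k + 1) * F.p (k + 1) + F.ε (k + 1) * F.p k) :=
    F.p_add_two h2 ▸ F.odd_p hN (by omega)
  by_contra ha
  have hodd_mul : Odd (F.a (k + 1) * F.p (k + 1)) :=
    (Int.not_even_iff_odd.1 ha).mul (F.odd_p hN (by omega))
  exact Int.not_even_iff_odd.2 hsum (hodd_mul.add_odd (hε.mul (F.odd_p hN (by omega))))

theorem two_le_a (hN : 2 ∣ N) {i : ℕ} (h1 : 1 ≤ i) (h2 : i ≤ n) : 2 ≤ F.a i := by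
  obtain ⟨r, hr⟩ := F.even_a hN h1 h2
  have := F.ha i h1 h2
  omega

theorem q_nonneg_and_lt_q_add_one (hN : 2 ∣ N) (hN0 : 0 < N) {j : ℕ} (hj : j ≤ n) :
    0 ≤ F.q j ∧ F.q j < F.q (j + 1) := by
  induction j with
  | zero => simp [F.hq0, F.hq1, hN0]
  | succ i ih =>
    obtain ⟨hi0, hi⟩ := ih (by omega)
    refine ⟨by omega, ?_⟩
    rw [F.q_add_two hj]
    have ha := F.two_le_a hN (i := i + 1) (by omega) hj
    rcases F.hε (i + 1) (by omega) hj with h | h <;> rw [h] <;> nlinarith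

theorem strictMonoOn_q (hN : 2 ∣ N) (hN0 : 0 < N) : StrictMonoOn F.q (Set.Iic (n + 1)) :=
  strictMonoOn_Iic_of_lt_succ fun j hj => (F.q_nonneg_and_lt_q_add_one hN hN0 (by omega)).2

theorem q_pos (hN : 2 ∣ N) (hN0 : 0 < N) {j : ℕ} (h1 : 1 ≤ j) (h2 : j ≤ n + 1) : 0 < F.q j :=
  F.hq0 ▸ F.strictMonoOn_q hN hN0 (by simp) (by simpa using h2) (by omega)

end Convergents

def truncate (F : FCF N (n + 1)) : FCF N n :=
  { F with
    ha := fun i h1 h2 => F.ha i h1 (by omega)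
    hε := fun i h1 h2 => F.hε i h1 (by omega)
    hrecp := fun i h1 h2 => F.hrecp i h1 (by omega)
    hrecq := fun i h1 h2 => F.hrecq i h1 (by omega)
    cond1 := fun i h1 h2 => F.cond1 i h1 (by omega)
    cond2 := fun i h1 h2 => F.cond2 i h1 (by omega)
    cond3 := fun i h1 h2 => F.cond3 i h1 (by omega) }

def base (b : ℤ) (hb : IsCoprime b N) : FCF N 0 where
  b := b
  a := fun _ => 0
  ε := fun _ => 0
  p := fun j => if j = 0 then 1 else b
  q := fun j => if j = 0 then 0 else N
  hb := hb
  hp0 := rfl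
  hq0 := rfl
  hp1 := rfl
  hq1 := rfl
  ha := fun _ h1 h2 => absurd h1 (by omega)
  hε := fun _ h1 h2 => absurd h1 (by omega)
  hrecp := fun _ h1 h2 => absurd h1 (by omega)
  hrecq := fun _ h1 h2 => absurd h1 (by omega)
  cond1 := fun _ h1 h2 => absurd h1 (by omega)
  cond2 := fun _ h1 h2 => absurd h1 (by omega)
  cond3 := fun _ h1 h2 => absurd h1 (by omega)

def snoc (F : FCF N n) (a e : ℤ) (ha : 1 ≤ a) (he : e = 1 ∨ e = -1) (hae : 1 ≤ a + e)
    (hlast : 1 ≤ n → 1 ≤ F.a n + e)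
    (hcop : IsCoprime (a * F.p (n + 1) + e * F.p n) (a * F.q (n + 1) + e * F.q n)) :
    FCF N (n + 1) where
  b := F.b
  a := Function.update F.a (n + 1) a
  ε := Function.update F.ε (n + 1) e
  p := Function.update F.p (n + 2) (a * F.p (n + 1) + e * F.p n)
  q := Function.update F.q (n + 2) (a * F.q (n + 1) + e * F.q n)
  hb := F.hb
  hp0 := by simp [F.hp0]
  hq0 := by simp [F.hq0]
  hp1 := by simp [F.hp1]
  hq1 := by simp [F.hq1]
  ha i h1 h2 := by
    rcases Nat.lt_or_eq_of_le h2 with h | rfl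
    · simpa (disch := omega) [Function.update_of_ne] using F.ha i h1 (by omega)
    · simpa using ha
  hε i h1 h2 := by
    rcases Nat.lt_or_eq_of_le h2 with h | rfl
    · simpa (disch := omega) [Function.update_of_ne] using F.hε i h1 (by omega)
    · simpa using he
  hrecp i h1 h2 := by
    rcases Nat.lt_or_eq_of_le h2 with h | rfl
    · simpa (disch := omega) [Function.update_of_ne] using F.hrecp i h1 (by omega)
    · simp
  hrecq i h1 h2 := by
    rcases Nat.lt_or_eq_of_le h2 with h | rfl
    · simpa (disch := omega) [Function.update_of_ne] using F.hrecq i h1 (by omega)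
    · simp
  cond1 i h1 h2 := by
    rcases Nat.lt_or_eq_of_le (Nat.le_of_lt_succ h2) with h | rfl
    · simpa (disch := omega) [Function.update_of_ne] using F.cond1 i h1 h
    · simpa (disch := omega) [Function.update_of_ne] using hlast h1
  cond2 i h1 h2 := by
    rcases Nat.lt_or_eq_of_le h2 with h | rfl
    · simpa (disch := omega) [Function.update_of_ne] using F.cond2 i h1 (by omega)
    · simpa using hae
  cond3 i h1 h2 := by
    rcases Nat.lt_or_eq_of_le h2 with h | rfl
    · simpa (disch := omega) [Function.update_of_ne] using F.cond3 i h1 (by omega)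
    · simpa using hcop

theorem exists_eq_add_sign_mul (hN0 : 0 < N) (F : FCF N n) {p q : ℤ} (hq : (N : ℤ) ∣ q)
    (hcross : |p * F.q (n + 1) - q * F.p (n + 1)| = N) :
    ∃ a e : ℤ, (e = 1 ∨ e = -1) ∧
      p = a * F.p (n + 1) + e * F.p n ∧ q = a * F.q (n + 1) + e * F.q n := by
  obtain ⟨c, hc⟩ := ((F.natCast_dvd_q (j := n) (by omega)).mul_left p).sub (hq.mul_left (F.p n))
  obtain ⟨δ, hδ, hD⟩ := exists_sign_mul_of_abs_eq (F.abs_det (le_refl n))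
  obtain ⟨η, hη, hE⟩ := exists_sign_mul_of_abs_eq hcross
  have hδδ : δ * δ = 1 := by rcases hδ with rfl | rfl <;> norm_num
  have hN0' : (N : ℤ) ≠ 0 := by exact_mod_cast hN0.ne'
  -- Cramer's rule in the basis of the last two convergents, whose determinant is `δ N`
  refine ⟨δ * c, -(δ * η), by rcases hδ with rfl | rfl <;> rcases hη with rfl | rfl <;> simp,
    mul_left_cancel₀ hN0' ?_, mul_left_cancel₀ hN0' ?_⟩
  · linear_combination δ * F.p (n + 1) * hc - δ * F.p n * hE - δ * p * hD - N * p * hδδ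
  · linear_combination δ * F.q (n + 1) * hc - δ * F.q n * hE - δ * q * hD - N * q * hδδ

theorem exists_snoc_eq (hN : 2 ∣ N) (hN0 : 0 < N) (F : FCF N n) {p q : ℤ}
    (hpq : IsCoprime p q) (hq : (N : ℤ) ∣ q) (hlt : F.q (n + 1) < q)
    (hcross : |p * F.q (n + 1) - q * F.p (n + 1)| = N) :
    ∃ G : FCF N (n + 1), G.p (n + 2) = p ∧ G.q (n + 2) = q := by
  obtain ⟨a, e, he, rfl, rfl⟩ := F.exists_eq_add_sign_mul hN0 hq hcross
  obtain ⟨hq₀, hq₁⟩ := F.q_nonneg_and_lt_q_add_one hN hN0 (le_refl n)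
  have ha : 1 ≤ a := by
    by_contra! ha
    rcases he with rfl | rfl <;> nlinarith
  have hae : 1 ≤ a + e := by
    rcases he with rfl | rfl
    · omega
    · by_contra! hae
      obtain rfl : a = 1 := by omega
      linarith
  have hlast (h1 : 1 ≤ n) : 1 ≤ F.a n + e := by
    have := F.two_le_a hN h1 le_rfl
    rcases he with rfl | rfl <;> omega
  exact ⟨F.snoc a e ha he hae hlast hpq, by simp [snoc], by simp [snoc]⟩

theorem convergents_eq_of_last_eq (hN : 2 ∣ N) (hN0 : 0 < N) {n n' : ℕ} (F : FCF N n)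
    (F' : FCF N n') (hp : F.p (n + 1) = F'.p (n' + 1)) (hq : F.q (n + 1) = F'.q (n' + 1)) :
    n = n' ∧ ∀ j ≤ n + 1, F.p j = F'.p j ∧ F.q j = F'.q j := by
  have hlong {m : ℕ} (G : FCF N (m + 1)) : (N : ℤ) < G.q (m + 2) :=
    G.hq1 ▸ G.strictMonoOn_q hN hN0 (by simp) (by simp) (by omega)
  induction n generalizing n' with
  | zero =>
    cases n' with
    | zero =>
      refine ⟨rfl, fun j hj => ?_⟩
      interval_cases j
      exacts [⟨F.hp0.trans F'.hp0.symm, F.hq0.trans F'.hq0.symm⟩, ⟨hp, hq⟩]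
    | succ m' => exact absurd (hq ▸ F.hq1) (hlong F').ne'
  | succ m ih =>
    cases n' with
    | zero => exact absurd (hq.symm ▸ F'.hq1) (hlong F).ne'
    | succ m' =>
      have hparent : F.p (m + 1) = F'.p (m' + 1) ∧ F.q (m + 1) = F'.q (m' + 1) :=
        lower_neighbor_unique (F.isCoprime_p_q le_rfl) (F.odd_p hN le_rfl)
          (F.odd_p hN (j := m + 1) (by omega)) (F'.odd_p hN (j := m' + 1) (by omega))
          (F.q_pos hN hN0 (j := m + 1) (by omega) (by omega))
          (F.q_nonneg_and_lt_q_add_one hN hN0 le_rfl).2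
          (F'.q_pos hN hN0 (j := m' + 1) (by omega) (by omega))
          (hq ▸ (F'.q_nonneg_and_lt_q_add_one hN hN0 le_rfl).2)
          (by rw [F.abs_det le_rfl, hp, hq, F'.abs_det le_rfl])
      obtain ⟨rfl, h⟩ := ih F.truncate F'.truncate hparent.1 hparent.2
      refine ⟨rfl, fun j hj => ?_⟩
      rcases Nat.lt_or_eq_of_le hj with hj | rfl
      exacts [h j (by omega), ⟨hp, hq⟩]

theorem eq_of_last_eq (hN : 2 ∣ N) (hN0 : 0 < N) {n n' : ℕ} (F : FCF N n)
    (F' : FCF N n') (hp : F.p (n + 1) = F'.p (n' + 1)) (hq : F.q (n + 1) = F'.q (n' + 1)) :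
    n = n' ∧ F.b = F'.b ∧ ∀ i, 1 ≤ i → i ≤ n → F.a i = F'.a i ∧ F.ε i = F'.ε i := by
  obtain ⟨rfl, h⟩ := convergents_eq_of_last_eq hN hN0 F F' hp hq
  refine ⟨rfl, by simpa [F.hp1, F'.hp1] using (h 1 (by omega)).1, fun i h1 h2 => ?_⟩
  obtain ⟨k, rfl⟩ : ∃ k, i = k + 1 := ⟨i - 1, by omega⟩
  have hdet : F.p (k + 1) * F.q k - F.q (k + 1) * F.p k ≠ 0 := by
    rw [← abs_ne_zero, F.abs_det (by omega)]; exact_mod_cast hN0.ne'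
  refine eq_and_eq_of_combination_eq hdet ?_ ?_
  · rw [← F.p_add_two h2, (h (k + 2) (by omega)).1, F'.p_add_two h2, (h (k + 1) (by omega)).1,
      (h k (by omega)).1]
  · rw [← F.q_add_two h2, (h (k + 2) (by omega)).2, F'.q_add_two h2, (h (k + 1) (by omega)).2,
      (h k (by omega)).2]

theorem exists_last_eq {l : ℕ} (hl : 1 ≤ l) {p q : ℤ} (hq : 0 < q) (hpq : IsCoprime p q)
    (hdvd : 2 ^ l ∣ q) : ∃ (n : ℕ) (F : FCF (2 ^ l) n), F.p (n + 1) = p ∧ F.q (n + 1) = q := by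
  have hcast : ((2 ^ l : ℕ) : ℤ) = 2 ^ l := by push_cast; rfl
  have hp : Odd p := Int.isCoprime_two_right.1 <|
    hpq.of_isCoprime_of_dvd_right ((dvd_pow_self 2 (by omega)).trans hdvd)
  rcases (Int.le_of_dvd hq hdvd).eq_or_lt with heq | hlt
  · exact ⟨0, base p (by rwa [hcast, heq]), rfl, by simp [base, heq]⟩
  · obtain ⟨r, s, hs, hsq, hsdvd, hrs, hcross⟩ := exists_lower_neighbor hpq hp hdvd hlt
    obtain ⟨n, F, rfl, rfl⟩ := exists_last_eq hl hs hrs hsdvd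
    exact ⟨n + 1, F.exists_snoc_eq (dvd_pow_self 2 (by omega)) (by positivity) hpq (hcast ▸ hdvd)
      hsq (hcast ▸ hcross)⟩
termination_by q.toNat
decreasing_by omega

end FCF

/-- For every `l ≥ 1` and every `x ≠ ∞` in `X_{2^l}`, there is
exactly one finite `F_{2^l}`-continued fraction whose value is `x`: one exists,
and any two such have the same length `n`, the same `b`, and the same
coefficients `aᵢ` and `εᵢ`. -/
theorem stmt15 (l : ℕ) (hl : 1 ≤ l) (x : X (2 ^ l)) (hx : x ≠ infty (2 ^ l)) :
    (∃ (n : ℕ) (F : FCF (2 ^ l) n),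
      (F.p (n + 1) : ℚ) / (F.q (n + 1) : ℚ) = fval x) ∧
    (∀ (n n' : ℕ) (F : FCF (2 ^ l) n) (F' : FCF (2 ^ l) n'),
      (F.p (n + 1) : ℚ) / (F.q (n + 1) : ℚ) = fval x →
      (F'.p (n' + 1) : ℚ) / (F'.q (n' + 1) : ℚ) = fval x →
      n = n' ∧ F.b = F'.b ∧
        ∀ i, 1 ≤ i → i ≤ n → F.a i = F'.a i ∧ F.ε i = F'.ε i) := by
  obtain ⟨⟨P, Q⟩, hQ, hPQ, hdvd, hinf⟩ := x
  have hQ0 : 0 < Q := hQ.lt_of_ne fun h => hx (Subtype.ext (Prod.ext (hinf h.symm) h.symm))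
  have h2 : 2 ∣ 2 ^ l := dvd_pow_self 2 (by omega)
  have hlast {n : ℕ} (F : FCF (2 ^ l) n) (hF : (F.p (n + 1) : ℚ) / F.q (n + 1) = P / Q) :
      F.p (n + 1) = P ∧ F.q (n + 1) = Q :=
    Rat.div_int_inj (F.q_pos h2 (by positivity) le_add_self le_rfl) hQ0
      (Int.isCoprime_iff_nat_coprime.1 (F.isCoprime_p_q le_rfl))
      (Int.isCoprime_iff_nat_coprime.1 hPQ) hF
  refine ⟨?_, fun n n' F F' hF hF' => ?_⟩
  · obtain ⟨n, F, hp, hq⟩ := FCF.exists_last_eq hl hQ0 hPQ (by exact_mod_cast hdvd)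
    exact ⟨n, F, by rw [hp, hq]; rfl⟩
  · obtain ⟨hp, hq⟩ := hlast F hF
    obtain ⟨hp', hq'⟩ := hlast F' hF'
    exact FCF.eq_of_last_eq h2 (by positivity) F F' (hp.trans hp'.symm) (hq.trans hq'.symm)
end
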